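/- arXiv:1610.00044 — 8 statements merged into one kernel-verified Lean document; each statement's English description precedes it below -/
import Mathlib

section
/- (Convexity part of Proposition 3.1, single channel: the value function is piecewise linear and convex in the belief.) For every integer l ≥ 1, the function λ ↦ V(λ, l) is convex on the interval [0,1]. -/
lemma my_convexOn_congr {s : Set ℝ} {g h : ℝ → ℝ} (hg : ConvexOn ℝ s g)
    (he : ∀ x ∈ s, h x = g x) : ConvexOn ℝ s h := by
  refine ⟨hg.1, fun x hx y hy t u ht hu htu => ?_⟩
  rw [he _ (hg.1 hx hy ht hu htu), he x hx, he y hy]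
  exact hg.2 hx hy ht hu htu

lemma my_affine_conv (s : Set ℝ) (hs : Convex ℝ s) (p q : ℝ) :
    ConvexOn ℝ s (fun x => p + x * q) := by
  refine ⟨hs, fun x _ y _ t u ht hu htu => ?_⟩
  simp only [smul_eq_mul]
  apply le_of_eq
  linear_combination -p * htu

lemma my_comp_line {g : ℝ → ℝ} (hg : ConvexOn ℝ (Set.Icc (0:ℝ) 1) g)
    (a b : ℝ) (hb0 : 0 ≤ b) (hba : b ≤ a) (ha1 : a ≤ 1) :
    ConvexOn ℝ (Set.Icc (0:ℝ) 1) (fun lam => g (b + (a - b) * lam)) := by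
  refine ⟨convex_Icc _ _, fun x hx y hy t u ht hu htu => ?_⟩
  simp only [smul_eq_mul]
  have hx' : b + (a - b) * x ∈ Set.Icc (0:ℝ) 1 := by
    constructor <;> nlinarith [hx.1, hx.2]
  have hy' : b + (a - b) * y ∈ Set.Icc (0:ℝ) 1 := by
    constructor <;> nlinarith [hy.1, hy.2]
  have key : b + (a - b) * (t * x + u * y)
      = t * (b + (a - b) * x) + u * (b + (a - b) * y) := by
    linear_combination -b * htu
  rw [key]
  have := hg.2 hx' hy' ht hu htu
  simpa using this

/-- Action-value of waiting: `Q₀(λ,l) = −f(l) + V(Ω(λ), l+1)` with `Ω(λ)=β+(α−β)λ`. -/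
noncomputable def Q0 (a b : ℝ) (f : ℕ → ℝ) (V : ℝ → ℕ → ℝ) (lam : ℝ) (l : ℕ) : ℝ :=
  -(f l) + V (b + (a - b) * lam) (l + 1)

/-- Action-value of sense-then-wait:
`Q₁(λ,l) = −c_s + λ(Φ−P_p+V(α,1)) + (1−λ)(−f(l)+V(β,l+1))`. -/
noncomputable def Q1 (a b Phi cs Pp : ℝ) (f : ℕ → ℝ) (V : ℝ → ℕ → ℝ) (lam : ℝ) (l : ℕ) : ℝ :=
  -cs + lam * (Phi - Pp + V a 1) + (1 - lam) * (-(f l) + V b (l + 1))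

/-- Action-value of sense-then-dedicated:
`Q₂(λ,l) = Φ−c_s + λ(−P_p+V(α,1)) + (1−λ)(−P₃G+V(β,1))` (independent of `l`). -/
noncomputable def Q2 (a b Phi cs Pp P3G : ℝ) (V : ℝ → ℕ → ℝ) (lam : ℝ) (_l : ℕ) : ℝ :=
  Phi - cs + lam * (-Pp + V a 1) + (1 - lam) * (-P3G + V b 1)

theorem stmt_2
    (a b Phi cs Pp P3G gu : ℝ) (f : ℕ → ℝ) (V : ℝ → ℕ → ℝ) (lstar : ℕ)
    (hb0 : 0 ≤ b) (hba : b ≤ a) (ha1 : a ≤ 1) (hden : 0 < 1 - a + b)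
    (hcs : 0 ≤ cs) (hP : Pp < P3G) (hPhi : 0 ≤ Phi - cs - Pp)
    (hf : Monotone f) (hf0 : ∀ l : ℕ, 1 ≤ l → 0 ≤ f l)
    (hlstar : 1 ≤ lstar)
    (hBell : ∀ lam ∈ Set.Icc (0:ℝ) 1, ∀ l : ℕ, 1 ≤ l →
      gu + V lam l =
        max (max (Q0 a b f V lam l) (Q1 a b Phi cs Pp f V lam l))
          (Q2 a b Phi cs Pp P3G V lam l))
    (hterm : ∀ l : ℕ, lstar ≤ l → ∀ lam ∈ Set.Icc (0:ℝ) 1,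
      gu + V lam l = Q2 a b Phi cs Pp P3G V lam l) :
    ∀ l : ℕ, 1 ≤ l → ConvexOn ℝ (Set.Icc (0:ℝ) 1) (fun lam => V lam l) := by

  have base : ∀ l : ℕ, lstar ≤ l → ConvexOn ℝ (Set.Icc (0:ℝ) 1) (fun lam => V lam l) := by
    intro l hl
    refine my_convexOn_congr (my_affine_conv _ (convex_Icc 0 1)
      (-gu + (Phi - cs) + (-P3G + V b 1)) ((-Pp + V a 1) - (-P3G + V b 1))) ?_
    intro x hx
    have h := hterm l hl x hx
    simp only [Q2] at h
    linear_combination h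
  have aux : ∀ n : ℕ, ∀ l : ℕ, 1 ≤ l → lstar ≤ l + n →
      ConvexOn ℝ (Set.Icc (0:ℝ) 1) (fun lam => V lam l) := by
    intro n
    induction n with
    | zero => intro l hl hls; exact base l (by simpa using hls)
    | succ n ih =>
      intro l hl hls
      by_cases hc : lstar ≤ l
      · exact base l hc
      · have ih1 : ConvexOn ℝ (Set.Icc (0:ℝ) 1) (fun lam => V lam (l+1)) :=
          ih (l+1) (by omega) (by omega)
        have hQ0 : ConvexOn ℝ (Set.Icc (0:ℝ) 1) (fun lam => Q0 a b f V lam l) := by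
          have h1 := my_comp_line ih1 a b hb0 hba ha1
          have h2 := (convexOn_const (-(f l)) (convex_Icc (0:ℝ) 1)).add h1
          exact my_convexOn_congr h2 (fun x _ => by simp [Q0])
        have hQ1 : ConvexOn ℝ (Set.Icc (0:ℝ) 1) (fun lam => Q1 a b Phi cs Pp f V lam l) := by
          refine my_convexOn_congr (my_affine_conv _ (convex_Icc 0 1)
            (-cs + (-(f l) + V b (l+1))) ((Phi - Pp + V a 1) - (-(f l) + V b (l+1)))) ?_
          intro x _; simp only [Q1]; ring
        have hQ2 : ConvexOn ℝ (Set.Icc (0:ℝ) 1) (fun lam => Q2 a b Phi cs Pp P3G V lam l) := by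
          refine my_convexOn_congr (my_affine_conv _ (convex_Icc 0 1)
            (Phi - cs + (-P3G + V b 1)) ((-Pp + V a 1) - (-P3G + V b 1))) ?_
          intro x _; simp only [Q2]; ring
        have hmax := (hQ0.sup hQ1).sup hQ2
        have hg : ConvexOn ℝ (Set.Icc (0:ℝ) 1)
            (fun lam => -gu + max (max (Q0 a b f V lam l) (Q1 a b Phi cs Pp f V lam l))
              (Q2 a b Phi cs Pp P3G V lam l)) :=
          (convexOn_const (-gu) (convex_Icc (0:ℝ) 1)).add hmax
        refine my_convexOn_congr hg ?_
        intro x hx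
        have h := hBell x hx l hl
        linarith
  intro l hl
  exact aux lstar l hl (Nat.le_add_left _ _)
end

section
/- (Lemma A.1.) −P_p + V(α, 1) ≥ −P_{3G} + V(β, 1); i.e., transmitting a fresh packet after observing the licensed channel idle is at least as valuable as transmitting it on the dedicated channel after observing the licensed channel busy. -/
theorem stmt_4
    (a b Phi cs Pp P3G gu : ℝ) (f : ℕ → ℝ) (V : ℝ → ℕ → ℝ) (lstar : ℕ)
    (hb0 : 0 ≤ b) (hba : b ≤ a) (ha1 : a ≤ 1) (hden : 0 < 1 - a + b)
    (hcs : 0 ≤ cs) (hP : Pp < P3G) (hPhi : 0 ≤ Phi - cs - Pp)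
    (hf : Monotone f) (hf0 : ∀ l : ℕ, 1 ≤ l → 0 ≤ f l)
    (hlstar : 1 ≤ lstar)
    (hBell : ∀ lam ∈ Set.Icc (0:ℝ) 1, ∀ l : ℕ, 1 ≤ l →
      gu + V lam l =
        max (max (Q0 a b f V lam l) (Q1 a b Phi cs Pp f V lam l))
          (Q2 a b Phi cs Pp P3G V lam l))
    (hterm : ∀ l : ℕ, lstar ≤ l → ∀ lam ∈ Set.Icc (0:ℝ) 1,
      gu + V lam l = Q2 a b Phi cs Pp P3G V lam l) :
    -Pp + V a 1 ≥ -P3G + V b 1 := by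
  have hmema : a ∈ Set.Icc (0:ℝ) 1 := ⟨le_trans hb0 hba, ha1⟩
  have hmemb : b ∈ Set.Icc (0:ℝ) 1 := ⟨hb0, le_trans hba ha1⟩
  have hmemΩ : ∀ lam ∈ Set.Icc (0:ℝ) 1, (b + (a - b) * lam) ∈ Set.Icc (0:ℝ) 1 := by
    rintro lam ⟨h0, h1⟩
    constructor
    · nlinarith
    · nlinarith
  -- Lemma 1: V is nonincreasing in l (backward induction from lstar).
  have hmono : ∀ k l : ℕ, 1 ≤ l → lstar ≤ l + k → ∀ lam ∈ Set.Icc (0:ℝ) 1,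
      V lam (l + 1) ≤ V lam l := by
    intro k
    induction k with
    | zero =>
      intro l hl hls lam hlam
      have h1 := hterm l (by omega) lam hlam
      have h2 := hterm (l + 1) (by omega) lam hlam
      simp only [Q2] at h1 h2
      linarith
    | succ k ih =>
      intro l hl hls lam hlam
      have hB1 := hBell lam hlam l hl
      have hB2 := hBell lam hlam (l + 1) (by omega)
      have hfm : f l ≤ f (l + 1) := hf (by omega)
      have hQ0 : Q0 a b f V lam (l + 1) ≤ Q0 a b f V lam l := by
        have hV := ih (l + 1) (by omega) (by omega) _ (hmemΩ lam hlam)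
        simp only [Q0]
        linarith
      have hQ1 : Q1 a b Phi cs Pp f V lam (l + 1) ≤ Q1 a b Phi cs Pp f V lam l := by
        have hV := ih (l + 1) (by omega) (by omega) b hmemb
        have h1l : (0:ℝ) ≤ 1 - lam := by linarith [hlam.2]
        simp only [Q1]
        nlinarith
      have hQ2 : Q2 a b Phi cs Pp P3G V lam (l + 1) = Q2 a b Phi cs Pp P3G V lam l := rfl
      have hle : gu + V lam (l + 1) ≤ gu + V lam l := by
        rw [hB1, hB2, hQ2]
        exact max_le_max (max_le_max hQ0 hQ1) le_rfl
      linarith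
  -- Chained: V lam l ≤ V lam 1 for l ≥ 1.
  have hchain : ∀ lam ∈ Set.Icc (0:ℝ) 1, ∀ l : ℕ, 1 ≤ l → V lam l ≤ V lam 1 := by
    intro lam hlam l hl
    induction l, hl using Nat.le_induction with
    | base => exact le_rfl
    | succ n hn ih =>
      exact le_trans (hmono lstar n hn (by omega) lam hlam) ih
  -- Main argument: by contradiction.
  by_contra hcon
  push_neg at hcon
  -- hcon : -Pp + V a 1 < -P3G + V b 1, hence V b 1 - V a 1 > P3G - Pp > 0.
  have hE : P3G - Pp < V b 1 - V a 1 := by linarith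
  have hEpos : 0 < V b 1 - V a 1 := by linarith
  have key : ∀ k l : ℕ, 1 ≤ l → lstar ≤ l + k →
      ∀ lam ∈ Set.Icc (0:ℝ) 1, ∀ lam' ∈ Set.Icc (0:ℝ) 1, lam' ≤ lam →
      V lam' l - V lam l ≤ (lam - lam') * (V b 1 - V a 1) := by
    intro k
    induction k with
    | zero =>
      intro l hl hls lam hlam lam' hlam' hle
      have h1 := hterm l (by omega) lam hlam
      have h2 := hterm l (by omega) lam' hlam'
      simp only [Q2] at h1 h2
      nlinarith [mul_nonneg (sub_nonneg.2 hle) (le_of_lt (sub_pos.2 hP))]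
    | succ k ih =>
      intro l hl hls lam hlam lam' hlam' hle
      have hBl := hBell lam hlam l hl
      have hBl' := hBell lam' hlam' l hl
      have hge0 : Q0 a b f V lam l ≤ gu + V lam l := by
        rw [hBl]; exact le_max_of_le_left (le_max_left _ _)
      have hge1 : Q1 a b Phi cs Pp f V lam l ≤ gu + V lam l := by
        rw [hBl]; exact le_max_of_le_left (le_max_right _ _)
      have hge2 : Q2 a b Phi cs Pp P3G V lam l ≤ gu + V lam l := by
        rw [hBl]; exact le_max_right _ _
      set E := V b 1 - V a 1 with hEdef
      have hsub : (0:ℝ) ≤ lam - lam' := sub_nonneg.2 hle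
      -- bound each action value at lam'
      have hq2 : Q2 a b Phi cs Pp P3G V lam' l ≤ gu + V lam l + (lam - lam') * E := by
        have : Q2 a b Phi cs Pp P3G V lam' l - Q2 a b Phi cs Pp P3G V lam l
            = (lam - lam') * (E - (P3G - Pp)) := by
          simp only [Q2, hEdef]; ring
        nlinarith [mul_nonneg hsub (le_of_lt (sub_pos.2 hP))]
      have hq0 : Q0 a b f V lam' l ≤ gu + V lam l + (lam - lam') * E := by
        have hIH := ih (l + 1) (by omega) (by omega)
          (b + (a - b) * lam) (hmemΩ lam hlam)
          (b + (a - b) * lam') (hmemΩ lam' hlam')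
          (by nlinarith)
        have hdiff : (b + (a - b) * lam) - (b + (a - b) * lam') = (a - b) * (lam - lam') := by
          ring
        -- V(Ωλ',l+1) - V(Ωλ,l+1) ≤ (a-b)(lam-lam')E ≤ (lam-lam')E
        have h2 : (a - b) * (lam - lam') * E ≤ (lam - lam') * E := by
          nlinarith [mul_nonneg hsub (le_of_lt hEpos)]
        simp only [Q0]
        rw [hdiff] at hIH
        have := hge0
        simp only [Q0] at this
        linarith
      have hq1 : Q1 a b Phi cs Pp f V lam' l ≤ gu + V lam l + (lam - lam') * E := by
        have hVb : V b (l + 1) ≤ V b 1 := hchain b hmemb (l + 1) (by omega)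
        have hfl : 0 ≤ f l := hf0 l hl
        have hdiff : Q1 a b Phi cs Pp f V lam' l - Q1 a b Phi cs Pp f V lam l
            = (lam - lam') * ((-(f l) + V b (l + 1)) - (Phi - Pp + V a 1)) := by
          simp only [Q1]; ring
        have hbr : (-(f l) + V b (l + 1)) - (Phi - Pp + V a 1) ≤ E := by
          simp only [hEdef]; linarith
        nlinarith [mul_le_mul_of_nonneg_left hbr hsub]
      have hmax : gu + V lam' l ≤ gu + V lam l + (lam - lam') * E := by
        rw [hBl']
        exact max_le (max_le hq0 hq1) hq2
      linarith
  have hfin := key lstar 1 le_rfl (by omega) a hmema b hmemb hba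
  -- V b 1 - V a 1 ≤ (a - b) * (V b 1 - V a 1), with a - b < 1: contradiction
  nlinarith
end

section
/- (Proposition 4.1.) For every integer l ≥ 1 and all λ₁, λ₂ ∈ [0,1] with λ₁ ≤ λ₂, V(λ₁, l) ≤ V(λ₂, l); i.e., the value function is monotonically increasing with the belief. -/
private lemma max3_le {A B C A' B' C' c : ℝ} (h0 : A ≤ A' + c) (h1 : B ≤ B' + c)
    (h2 : C ≤ C' + c) : max (max A B) C ≤ max (max A' B') C' + c := by
  have t0 : A' ≤ max (max A' B') C' := le_trans (le_max_left _ _) (le_max_left _ _)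
  have t1 : B' ≤ max (max A' B') C' := le_trans (le_max_right _ _) (le_max_left _ _)
  have t2 : C' ≤ max (max A' B') C' := le_max_right _ _
  exact max_le (max_le (by linarith) (by linarith)) (by linarith)

set_option maxHeartbeats 1600000 in
theorem stmt_5
    (a b Phi cs Pp P3G gu : ℝ) (f : ℕ → ℝ) (V : ℝ → ℕ → ℝ) (lstar : ℕ)
    (hb0 : 0 ≤ b) (hba : b ≤ a) (ha1 : a ≤ 1) (hden : 0 < 1 - a + b)
    (hcs : 0 ≤ cs) (hP : Pp < P3G) (hPhi : 0 ≤ Phi - cs - Pp)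
    (hf : Monotone f) (hf0 : ∀ l : ℕ, 1 ≤ l → 0 ≤ f l)
    (hlstar : 1 ≤ lstar)
    (hBell : ∀ lam ∈ Set.Icc (0:ℝ) 1, ∀ l : ℕ, 1 ≤ l →
      gu + V lam l =
        max (max (Q0 a b f V lam l) (Q1 a b Phi cs Pp f V lam l))
          (Q2 a b Phi cs Pp P3G V lam l))
    (hterm : ∀ l : ℕ, lstar ≤ l → ∀ lam ∈ Set.Icc (0:ℝ) 1,
      gu + V lam l = Q2 a b Phi cs Pp P3G V lam l) :
    ∀ l : ℕ, 1 ≤ l → ∀ lam1 ∈ Set.Icc (0:ℝ) 1, ∀ lam2 ∈ Set.Icc (0:ℝ) 1,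
      lam1 ≤ lam2 → V lam1 l ≤ V lam2 l := by
  have ha0 : (0:ℝ) ≤ a := le_trans hb0 hba
  have hamem : a ∈ Set.Icc (0:ℝ) 1 := ⟨ha0, ha1⟩
  have hbmem : b ∈ Set.Icc (0:ℝ) 1 := ⟨hb0, le_trans hba ha1⟩
  have hΩmem : ∀ lam ∈ Set.Icc (0:ℝ) 1, b + (a - b) * lam ∈ Set.Icc (0:ℝ) 1 := by
    rintro lam ⟨h0, h1⟩
    constructor
    · nlinarith
    · nlinarith
  -- Lemma A : V is nonincreasing in l
  have lemA : ∀ n : ℕ, ∀ l : ℕ, 1 ≤ l → lstar ≤ l + n → ∀ lam ∈ Set.Icc (0:ℝ) 1,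
      V lam (l + 1) ≤ V lam l := by
    intro n
    induction n with
    | zero =>
      intro l hl hls lam hlam
      have h1 := hBell lam hlam l hl
      have h2 := hterm (l + 1) (by omega) lam hlam
      have h3 : Q2 a b Phi cs Pp P3G V lam (l + 1) = Q2 a b Phi cs Pp P3G V lam l := rfl
      have h4 := le_max_right (max (Q0 a b f V lam l) (Q1 a b Phi cs Pp f V lam l))
        (Q2 a b Phi cs Pp P3G V lam l)
      rw [h3] at h2
      linarith
    | succ n ih =>
      intro l hl hls lam hlam
      by_cases hcase : lstar ≤ l
      · have h1 := hBell lam hlam l hl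
        have h2 := hterm (l + 1) (by omega) lam hlam
        have h3 : Q2 a b Phi cs Pp P3G V lam (l + 1) = Q2 a b Phi cs Pp P3G V lam l := rfl
        have h4 := le_max_right (max (Q0 a b f V lam l) (Q1 a b Phi cs Pp f V lam l))
          (Q2 a b Phi cs Pp P3G V lam l)
        rw [h3] at h2
        linarith
      · have ih1 : ∀ mu ∈ Set.Icc (0:ℝ) 1, V mu (l + 2) ≤ V mu (l + 1) :=
          ih (l + 1) (by omega) (by omega)
        have h1 := hBell lam hlam l hl
        have h2 := hBell lam hlam (l + 1) (by omega)
        have hfm : f l ≤ f (l + 1) := hf (by omega)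
        have hQ0 : Q0 a b f V lam (l + 1) ≤ Q0 a b f V lam l := by
          have := ih1 _ (hΩmem lam hlam)
          unfold Q0
          linarith
        have hQ1 : Q1 a b Phi cs Pp f V lam (l + 1) ≤ Q1 a b Phi cs Pp f V lam l := by
          have hb2 := ih1 b hbmem
          have hl1 : (0:ℝ) ≤ 1 - lam := by linarith [hlam.2]
          unfold Q1
          nlinarith
        have hQ2 : Q2 a b Phi cs Pp P3G V lam (l + 1) = Q2 a b Phi cs Pp P3G V lam l := rfl
        have := max_le_max (max_le_max hQ0 hQ1) hQ2.le
        linarith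
  -- Lemma A' : V lam l ≤ V lam 1
  have lemA' : ∀ l : ℕ, 1 ≤ l → ∀ lam ∈ Set.Icc (0:ℝ) 1, V lam l ≤ V lam 1 := by
    intro l hl
    induction l with
    | zero => omega
    | succ l ih =>
      intro lam hlam
      rcases Nat.eq_or_lt_of_le hl with h | h
      · simp [← h]
      · have hl1 : 1 ≤ l := by omega
        exact le_trans (lemA lstar l hl1 (by omega) lam hlam) (ih hl1 lam hlam)
  set D : ℝ := V b 1 - V a 1 with hD
  set M : ℝ := max 0 D with hM
  have hM0 : (0:ℝ) ≤ M := le_max_left _ _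
  have hDM : D ≤ M := le_max_right _ _
  -- Lemma B : Lipschitz-type bound
  have lemB : ∀ n : ℕ, ∀ l : ℕ, 1 ≤ l → lstar ≤ l + n →
      ∀ lam1 ∈ Set.Icc (0:ℝ) 1, ∀ lam2 ∈ Set.Icc (0:ℝ) 1, lam1 ≤ lam2 →
      V lam1 l - V lam2 l ≤ (lam2 - lam1) * M := by
    intro n
    have base : ∀ l : ℕ, lstar ≤ l → ∀ lam1 ∈ Set.Icc (0:ℝ) 1, ∀ lam2 ∈ Set.Icc (0:ℝ) 1,
        lam1 ≤ lam2 → V lam1 l - V lam2 l ≤ (lam2 - lam1) * M := by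
      intro l hls lam1 h1 lam2 h2 hle
      have e1 := hterm l hls lam1 h1
      have e2 := hterm l hls lam2 h2
      have key : V lam1 l - V lam2 l = (lam2 - lam1) * (Pp - P3G + D) := by
        have : Q2 a b Phi cs Pp P3G V lam1 l - Q2 a b Phi cs Pp P3G V lam2 l
            = (lam2 - lam1) * (Pp - P3G + D) := by unfold Q2; rw [hD]; ring
        linarith
      rw [key]
      have : Pp - P3G + D ≤ M := by linarith
      nlinarith
    induction n with
    | zero =>
      intro l hl hls
      exact base l (by omega)
    | succ n ih =>
      intro l hl hls lam1 h1 lam2 h2 hle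
      by_cases hcase : lstar ≤ l
      · exact base l hcase lam1 h1 lam2 h2 hle
      · have ih1 : ∀ mu1 ∈ Set.Icc (0:ℝ) 1, ∀ mu2 ∈ Set.Icc (0:ℝ) 1, mu1 ≤ mu2 →
            V mu1 (l + 1) - V mu2 (l + 1) ≤ (mu2 - mu1) * M :=
          ih (l + 1) (by omega) (by omega)
        have e1 := hBell lam1 h1 l hl
        have e2 := hBell lam2 h2 l hl
        set c : ℝ := (lam2 - lam1) * M with hc
        have hc0 : 0 ≤ c := mul_nonneg (by linarith) hM0
        -- Q0 bound
        have hQ0 : Q0 a b f V lam1 l ≤ Q0 a b f V lam2 l + c := by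
          have hΩle : b + (a - b) * lam1 ≤ b + (a - b) * lam2 := by nlinarith
          have := ih1 _ (hΩmem lam1 h1) _ (hΩmem lam2 h2) hΩle
          have hab1 : a - b ≤ 1 := by linarith
          unfold Q0
          rw [hc]
          nlinarith
        -- Q1 bound
        have hQ1 : Q1 a b Phi cs Pp f V lam1 l ≤ Q1 a b Phi cs Pp f V lam2 l + c := by
          have hVb : V b (l + 1) ≤ V b 1 := lemA' (l + 1) (by omega) b hbmem
          have hfl : 0 ≤ f l := hf0 l hl
          have key : Q1 a b Phi cs Pp f V lam1 l - Q1 a b Phi cs Pp f V lam2 l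
              = (lam2 - lam1) * (-(f l) + V b (l + 1) + Pp - Phi - V a 1) := by
            unfold Q1; ring
          have hcoef : -(f l) + V b (l + 1) + Pp - Phi - V a 1 ≤ M := by
            have : Phi - Pp ≥ 0 := by linarith
            linarith [hDM]
          nlinarith [mul_le_mul_of_nonneg_left hcoef (show (0:ℝ) ≤ lam2 - lam1 by linarith)]
        -- Q2 bound
        have hQ2 : Q2 a b Phi cs Pp P3G V lam1 l ≤ Q2 a b Phi cs Pp P3G V lam2 l + c := by
          have key : Q2 a b Phi cs Pp P3G V lam1 l - Q2 a b Phi cs Pp P3G V lam2 l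
              = (lam2 - lam1) * (Pp - P3G + D) := by unfold Q2; rw [hD]; ring
          have hcoef : Pp - P3G + D ≤ M := by linarith
          nlinarith [mul_le_mul_of_nonneg_left hcoef (show (0:ℝ) ≤ lam2 - lam1 by linarith)]
        have := max3_le hQ0 hQ1 hQ2
        linarith
  -- M = 0
  have hDab : D ≤ (a - b) * M := by
    have := lemB lstar 1 le_rfl (by omega) b hbmem a hamem hba
    linarith
  have hMzero : M = 0 := by
    rcases le_or_gt D 0 with h | h
    · rw [hM]; exact max_eq_left h
    · exfalso
      have hMD : M = D := max_eq_right h.le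
      rw [hMD] at hDab
      nlinarith [mul_pos hden h]
  intro l hl lam1 h1 lam2 h2 hle
  have := lemB lstar l hl (by omega) lam1 h1 lam2 h2 hle
  rw [hMzero] at this
  linarith
end

section
/- (Positivity of the threshold coefficient, from the proof of Proposition 4.2.) For every integer l ≥ 1, f(l) + Φ − P_p + V(α, 1) − V(β, l+1) ≥ 0. -/
set_option maxHeartbeats 1600000 in
theorem stmt_6
    (a b Phi cs Pp P3G gu : ℝ) (f : ℕ → ℝ) (V : ℝ → ℕ → ℝ) (lstar : ℕ)
    (hb0 : 0 ≤ b) (hba : b ≤ a) (ha1 : a ≤ 1) (hden : 0 < 1 - a + b)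
    (hcs : 0 ≤ cs) (hP : Pp < P3G) (hPhi : 0 ≤ Phi - cs - Pp)
    (hf : Monotone f) (hf0 : ∀ l : ℕ, 1 ≤ l → 0 ≤ f l)
    (hlstar : 1 ≤ lstar)
    (hBell : ∀ lam ∈ Set.Icc (0:ℝ) 1, ∀ l : ℕ, 1 ≤ l →
      gu + V lam l =
        max (max (Q0 a b f V lam l) (Q1 a b Phi cs Pp f V lam l))
          (Q2 a b Phi cs Pp P3G V lam l))
    (hterm : ∀ l : ℕ, lstar ≤ l → ∀ lam ∈ Set.Icc (0:ℝ) 1,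
      gu + V lam l = Q2 a b Phi cs Pp P3G V lam l) :
    ∀ l : ℕ, 1 ≤ l → 0 ≤ f l + Phi - Pp + V a 1 - V b (l + 1) := by
  have ha0 : (0:ℝ) ≤ a := le_trans hb0 hba
  have hb1 : b ≤ 1 := le_trans hba ha1
  have haI : a ∈ Set.Icc (0:ℝ) 1 := Set.mem_Icc.mpr ⟨ha0, ha1⟩
  have hbI : b ∈ Set.Icc (0:ℝ) 1 := Set.mem_Icc.mpr ⟨hb0, hb1⟩
  have hPp : 0 ≤ Phi - Pp := by linarith
  have hf1 : 0 ≤ f 1 := hf0 1 le_rfl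
  have hOI : ∀ lam, lam ∈ Set.Icc (0:ℝ) 1 → (b + (a-b)*lam) ∈ Set.Icc (0:ℝ) 1 := by
    intro lam hmem
    obtain ⟨h0, h1⟩ := Set.mem_Icc.mp hmem
    refine Set.mem_Icc.mpr ⟨by nlinarith, by nlinarith⟩
  have hOmono : ∀ ν μ : ℝ, ν ≤ μ → b + (a-b)*ν ≤ b + (a-b)*μ := by
    intro ν μ h; nlinarith
  have hQ0 : ∀ lam, lam ∈ Set.Icc (0:ℝ) 1 → ∀ l : ℕ, 1 ≤ l →
      Q0 a b f V lam l ≤ gu + V lam l := by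
    intro lam hmem l hl
    rw [hBell lam hmem l hl]
    exact le_max_of_le_left (le_max_left _ _)
  have hQ1 : ∀ lam, lam ∈ Set.Icc (0:ℝ) 1 → ∀ l : ℕ, 1 ≤ l →
      Q1 a b Phi cs Pp f V lam l ≤ gu + V lam l := by
    intro lam hmem l hl
    rw [hBell lam hmem l hl]
    exact le_max_of_le_left (le_max_right _ _)
  have hQ2 : ∀ lam, lam ∈ Set.Icc (0:ℝ) 1 → ∀ l : ℕ, 1 ≤ l →
      Q2 a b Phi cs Pp P3G V lam l ≤ gu + V lam l := by
    intro lam hmem l hl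
    rw [hBell lam hmem l hl]
    exact le_max_right _ _
  -- L1 : V is nonincreasing in the delay (one step), by downward induction from lstar
  have L1 : ∀ t l : ℕ, 1 ≤ l → lstar ≤ l + t → ∀ lam, lam ∈ Set.Icc (0:ℝ) 1 →
      V lam (l+1) ≤ V lam l := by
    intro t
    induction t with
    | zero =>
      intro l hl hls lam hmem
      have h1 := hterm l (by omega) lam hmem
      have h2 := hterm (l+1) (by omega) lam hmem
      simp only [Q2] at h1 h2
      linarith
    | succ t ih =>
      intro l hl hls lam hmem
      by_cases hc : lstar ≤ l
      · have h1 := hterm l hc lam hmem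
        have h2 := hterm (l+1) (by omega) lam hmem
        simp only [Q2] at h1 h2
        linarith
      · have hB := hBell lam hmem (l+1) (by omega)
        obtain ⟨hm0, hm1⟩ := Set.mem_Icc.mp hmem
        have c0 : Q0 a b f V lam (l+1) ≤ gu + V lam l := by
          have h1 := hQ0 lam hmem l hl
          have h2 := ih (l+1) (by omega) (by omega) (b + (a-b)*lam) (hOI lam hmem)
          have h3 : f l ≤ f (l+1) := hf (by omega)
          simp only [Q0] at h1 ⊢
          linarith
        have c1 : Q1 a b Phi cs Pp f V lam (l+1) ≤ gu + V lam l := by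
          have h1 := hQ1 lam hmem l hl
          have h2 := ih (l+1) (by omega) (by omega) b hbI
          have h3 : f l ≤ f (l+1) := hf (by omega)
          simp only [Q1] at h1 ⊢
          nlinarith [mul_nonneg (show (0:ℝ) ≤ 1 - lam by linarith)
            (show (0:ℝ) ≤ (-(f l) + V b (l+1)) - (-(f (l+1)) + V b (l+1+1)) by linarith)]
        have c2 : Q2 a b Phi cs Pp P3G V lam (l+1) ≤ gu + V lam l := by
          have h1 := hQ2 lam hmem l hl
          simp only [Q2] at h1 ⊢
          linarith
        have hle := max_le (max_le c0 c1) c2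
        linarith [hB]
  -- iterated version
  have L1' : ∀ lam, lam ∈ Set.Icc (0:ℝ) 1 → ∀ k m : ℕ, 1 ≤ k → k ≤ m →
      V lam m ≤ V lam k := by
    intro lam hmem k m hk hkm
    induction m, hkm using Nat.le_induction with
    | base => exact le_rfl
    | succ m hkm ih =>
      exact le_trans (L1 lstar m (by omega) (by omega) lam hmem) ih
  -- MON : quasi-monotonicity in the belief
  have hMnn : (0:ℝ) ≤ max 0 (V b 1 - V a 1) := le_max_left _ _
  have hMd : V b 1 - V a 1 ≤ max 0 (V b 1 - V a 1) := le_max_right _ _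
  have MON : ∀ t l : ℕ, 1 ≤ l → lstar ≤ l + t → ∀ ν μ : ℝ,
      ν ∈ Set.Icc (0:ℝ) 1 → μ ∈ Set.Icc (0:ℝ) 1 → ν ≤ μ →
      V ν l - V μ l ≤ (μ - ν) * max 0 (V b 1 - V a 1) := by
    intro t
    induction t with
    | zero =>
      intro l hl hls ν μ hν hμ hνμ
      have h1 := hterm l (by omega) ν hν
      have h2 := hterm l (by omega) μ hμ
      simp only [Q2] at h1 h2
      nlinarith [mul_le_mul_of_nonneg_left
        (show V b 1 - V a 1 - (P3G - Pp) ≤ max 0 (V b 1 - V a 1) by linarith)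
        (show (0:ℝ) ≤ μ - ν by linarith)]
    | succ t ih =>
      intro l hl hls ν μ hν hμ hνμ
      by_cases hc : lstar ≤ l
      · have h1 := hterm l hc ν hν
        have h2 := hterm l hc μ hμ
        simp only [Q2] at h1 h2
        nlinarith [mul_le_mul_of_nonneg_left
          (show V b 1 - V a 1 - (P3G - Pp) ≤ max 0 (V b 1 - V a 1) by linarith)
          (show (0:ℝ) ≤ μ - ν by linarith)]
      · have hB := hBell ν hν l (by omega)
        obtain ⟨hμ0, hμ1⟩ := Set.mem_Icc.mp hμ
        have c0 : Q0 a b f V ν l ≤ gu + V μ l + (μ - ν) * max 0 (V b 1 - V a 1) := by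
          have h1 := hQ0 μ hμ l hl
          have h2 := ih (l+1) (by omega) (by omega) (b + (a-b)*ν) (b + (a-b)*μ)
            (hOI ν hν) (hOI μ hμ) (hOmono ν μ hνμ)
          simp only [Q0] at h1 ⊢
          nlinarith [mul_nonneg (mul_nonneg (show (0:ℝ) ≤ 1 - a + b by linarith)
            (show (0:ℝ) ≤ μ - ν by linarith)) hMnn]
        have c1 : Q1 a b Phi cs Pp f V ν l ≤ gu + V μ l + (μ - ν) * max 0 (V b 1 - V a 1) := by
          have h1 := hQ1 μ hμ l hl
          have hyb : V b (l+1) ≤ V b 1 := L1' b hbI 1 (l+1) le_rfl (by omega)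
          have hfl : f 1 ≤ f l := hf hl
          have hyX : (-(f l) + V b (l+1)) - (Phi - Pp + V a 1) ≤ max 0 (V b 1 - V a 1) := by
            linarith
          simp only [Q1] at h1 ⊢
          nlinarith [mul_le_mul_of_nonneg_left hyX (show (0:ℝ) ≤ μ - ν by linarith)]
        have c2 : Q2 a b Phi cs Pp P3G V ν l ≤ gu + V μ l + (μ - ν) * max 0 (V b 1 - V a 1) := by
          have h1 := hQ2 μ hμ l hl
          simp only [Q2] at h1 ⊢
          nlinarith [mul_le_mul_of_nonneg_left
            (show V b 1 - V a 1 - (P3G - Pp) ≤ max 0 (V b 1 - V a 1) by linarith)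
            (show (0:ℝ) ≤ μ - ν by linarith)]
        have hle := max_le (max_le c0 c1) c2
        linarith [hB]
  -- monotonicity at l = 1 between b and a
  have hD : V b 1 ≤ V a 1 := by
    by_contra hcon
    push_neg at hcon
    have h := MON lstar 1 le_rfl (by omega) b a hbI haI hba
    rw [max_eq_right (show (0:ℝ) ≤ V b 1 - V a 1 by linarith)] at h
    nlinarith [mul_pos hden (show (0:ℝ) < V b 1 - V a 1 by linarith)]
  -- F : the key gu-balanced comparison
  have F : ∀ t k m : ℕ, 1 ≤ k → k < m → lstar ≤ m + t → ∀ ν μ : ℝ,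
      ν ∈ Set.Icc (0:ℝ) 1 → μ ∈ Set.Icc (0:ℝ) 1 → ν ≤ μ →
      V ν m ≤ V μ k + (Phi - Pp + f k) := by
    intro t
    induction t with
    | zero =>
      intro k m hk hkm hls ν μ hν hμ hνμ
      have h1 := hterm m (by omega) ν hν
      have h2 := hQ2 μ hμ k hk
      simp only [Q2] at h1 h2
      have hfk := hf0 k hk
      nlinarith [mul_nonneg (show (0:ℝ) ≤ μ - ν by linarith)
        (show (0:ℝ) ≤ V a 1 - V b 1 + (P3G - Pp) by linarith)]
    | succ t ih =>
      intro k m hk hkm hls ν μ hν hμ hνμ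
      have hfk := hf0 k hk
      by_cases hc : lstar ≤ m
      · have h1 := hterm m hc ν hν
        have h2 := hQ2 μ hμ k hk
        simp only [Q2] at h1 h2
        nlinarith [mul_nonneg (show (0:ℝ) ≤ μ - ν by linarith)
          (show (0:ℝ) ≤ V a 1 - V b 1 + (P3G - Pp) by linarith)]
      · have hB := hBell ν hν m (by omega)
        obtain ⟨hμ0, hμ1⟩ := Set.mem_Icc.mp hμ
        have c0 : Q0 a b f V ν m ≤ gu + V μ k + (Phi - Pp + f k) := by
          have h1 := hQ0 μ hμ k hk
          have h2 := ih (k+1) (m+1) (by omega) (by omega) (by omega)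
            (b + (a-b)*ν) (b + (a-b)*μ) (hOI ν hν) (hOI μ hμ) (hOmono ν μ hνμ)
          have h3 : f (k+1) ≤ f m := hf (by omega)
          simp only [Q0] at h1 ⊢
          linarith
        have c1 : Q1 a b Phi cs Pp f V ν m ≤ gu + V μ k + (Phi - Pp + f k) := by
          have h1 := hQ1 μ hμ k hk
          have h2 := ih 1 (m+1) le_rfl (by omega) (by omega) b a hbI haI hba
          have hf1m : f 1 ≤ f m := hf (by omega)
          have hbk : V b (m+1) ≤ V b (k+1) := L1' b hbI (k+1) (m+1) (by omega) (by omega)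
          have hfkm : f k ≤ f m := hf (by omega)
          simp only [Q1] at h1 ⊢
          have hym : -(f m) + V b (m+1) ≤ Phi - Pp + V a 1 := by linarith
          have hyk : -(f m) + V b (m+1) ≤ -(f k) + V b (k+1) := by linarith
          nlinarith [mul_nonneg (show (0:ℝ) ≤ μ - ν by linarith)
              (show (0:ℝ) ≤ (Phi - Pp + V a 1) - (-(f m) + V b (m+1)) by linarith),
            mul_nonneg (show (0:ℝ) ≤ 1 - μ by linarith)
              (show (0:ℝ) ≤ (-(f k) + V b (k+1)) - (-(f m) + V b (m+1)) by linarith)]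
        have c2 : Q2 a b Phi cs Pp P3G V ν m ≤ gu + V μ k + (Phi - Pp + f k) := by
          have h1 := hQ2 μ hμ k hk
          simp only [Q2] at h1 ⊢
          nlinarith [mul_nonneg (show (0:ℝ) ≤ μ - ν by linarith)
            (show (0:ℝ) ≤ V a 1 - V b 1 + (P3G - Pp) by linarith)]
        have hle := max_le (max_le c0 c1) c2
        linarith [hB]
  intro l hl
  have h := F lstar 1 (l+1) le_rfl (by omega) (by omega) b a hbI haI hba
  have hfl : f 1 ≤ f l := hf hl
  linarith
end

section
/- (Proposition 4.3.) Assume additionally that g_u > −f(l) for every integer l ≥ 1. Then for every λ ∈ [0,1] with λ > π₀ and every integer l ≥ 1, Q₀(λ,l) < max{Q₁(λ,l), Q₂(λ,l)}; i.e., when the belief exceeds the stationary idle probability the secondary user never takes the wait action. -/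
theorem stmt_8
    (a b Phi cs Pp P3G gu : ℝ) (f : ℕ → ℝ) (V : ℝ → ℕ → ℝ) (lstar : ℕ)
    (hb0 : 0 ≤ b) (hba : b ≤ a) (ha1 : a ≤ 1) (hden : 0 < 1 - a + b)
    (hcs : 0 ≤ cs) (hP : Pp < P3G) (hPhi : 0 ≤ Phi - cs - Pp)
    (hf : Monotone f) (hf0 : ∀ l : ℕ, 1 ≤ l → 0 ≤ f l)
    (hlstar : 1 ≤ lstar)
    (hBell : ∀ lam ∈ Set.Icc (0:ℝ) 1, ∀ l : ℕ, 1 ≤ l →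
      gu + V lam l =
        max (max (Q0 a b f V lam l) (Q1 a b Phi cs Pp f V lam l))
          (Q2 a b Phi cs Pp P3G V lam l))
    (hterm : ∀ l : ℕ, lstar ≤ l → ∀ lam ∈ Set.Icc (0:ℝ) 1,
      gu + V lam l = Q2 a b Phi cs Pp P3G V lam l)
    (hgu : ∀ l : ℕ, 1 ≤ l → gu > -(f l)) :
    ∀ lam ∈ Set.Icc (0:ℝ) 1, b / (1 - a + b) < lam → ∀ l : ℕ, 1 ≤ l →
      Q0 a b f V lam l <
        max (Q1 a b Phi cs Pp f V lam l) (Q2 a b Phi cs Pp P3G V lam l) := by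
  have ha0 : (0:ℝ) ≤ a := le_trans hb0 hba
  have hb1 : b ≤ 1 := le_trans hba ha1
  obtain ⟨p, hp_def⟩ : ∃ p : ℝ, p = b / (1 - a + b) := ⟨_, rfl⟩
  have hpc : p * (1 - a + b) = b := by rw [hp_def]; exact div_mul_cancel₀ b (ne_of_gt hden)
  have hp0 : 0 ≤ p := hp_def ▸ div_nonneg hb0 hden.le
  have hp1 : p ≤ 1 := by rw [hp_def, div_le_one hden]; linarith
  have hpa : p ≤ a := by
    nlinarith [hpc, mul_nonneg (sub_nonneg.2 hba) (sub_nonneg.2 ha1)]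
  have hbp : b ≤ p := by
    nlinarith [hpc, mul_nonneg hp0 (sub_nonneg.2 hba)]
  have haI : a ∈ Set.Icc (0:ℝ) 1 := ⟨ha0, ha1⟩
  have hbI : b ∈ Set.Icc (0:ℝ) 1 := ⟨hb0, hb1⟩
  -- generic downward induction principle
  have down : ∀ (P : ℕ → Prop), (∀ l, 1 ≤ l → lstar ≤ l → P l) →
      (∀ l, 1 ≤ l → l < lstar → P (l+1) → P l) → ∀ l, 1 ≤ l → P l := by
    intro P hbase hstep l hl
    have key : ∀ k l, 1 ≤ l → lstar ≤ l + k → P l := by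
      intro k
      induction k with
      | zero => intro l hl hls; exact hbase l hl (by omega)
      | succ k ih =>
        intro l hl hls
        by_cases h : lstar ≤ l
        · exact hbase l hl h
        · exact hstep l hl (by omega) (ih (l+1) (by omega) (by omega))
    exact key lstar l hl (by omega)
  -- membership of Ω(λ)
  have hOmI : ∀ lam : ℝ, 0 ≤ lam → lam ≤ 1 → (b + (a - b) * lam) ∈ Set.Icc (0:ℝ) 1 := by
    intro lam h0 h1
    constructor
    · nlinarith [mul_nonneg (sub_nonneg.2 hba) h0]
    · nlinarith [mul_le_mul_of_nonneg_left h1 (sub_nonneg.2 hba)]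
  -- Ω(λ) vs λ and p
  have hOm_le : ∀ lam : ℝ, p ≤ lam → b + (a - b) * lam ≤ lam := by
    intro lam hpl
    have e : lam - (b + (a - b) * lam) = (1 - a + b) * (lam - p) + (p * (1 - a + b) - b) := by
      ring
    have h1 : 0 ≤ (1 - a + b) * (lam - p) := mul_nonneg hden.le (by linarith)
    linarith [e, hpc]
  have hOm_ge : ∀ lam : ℝ, p ≤ lam → p ≤ b + (a - b) * lam := by
    intro lam hpl
    have e : (b + (a - b) * lam) - p = (a - b) * (lam - p) + (b - p * (1 - a + b)) := by
      ring
    have h1 : 0 ≤ (a - b) * (lam - p) := mul_nonneg (by linarith) (by linarith)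
    linarith [e, hpc]
  have hOm_geb : ∀ lam : ℝ, 0 ≤ lam → b ≤ b + (a - b) * lam := by
    intro lam h0
    have := mul_nonneg (sub_nonneg.2 hba) h0
    linarith
  have hOm_lep : ∀ lam : ℝ, 0 ≤ lam → lam ≤ p → b + (a - b) * lam ≤ p := by
    intro lam h0 hlp
    have e : p - (b + (a - b) * lam) = (a - b) * (p - lam) + (p * (1 - a + b) - b) := by
      ring
    have h1 : 0 ≤ (a - b) * (p - lam) := mul_nonneg (by linarith) (by linarith)
    linarith [e, hpc]
  -- Lemma A : V is antitone in l
  have lemA : ∀ l, 1 ≤ l → ∀ lam ∈ Set.Icc (0:ℝ) 1, V lam (l+1) ≤ V lam l := by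
    apply down (fun l => ∀ lam ∈ Set.Icc (0:ℝ) 1, V lam (l+1) ≤ V lam l)
    · intro l hl hls lam hmem
      have h1 := hterm l hls lam hmem
      have h2 := hterm (l+1) (by omega) lam hmem
      have h3 : Q2 a b Phi cs Pp P3G V lam l = Q2 a b Phi cs Pp P3G V lam (l+1) := rfl
      linarith
    · intro l hl hls ih lam hmem
      have hB1 := hBell lam hmem l hl
      have hB2 := hBell lam hmem (l+1) (by omega)
      have hOm := hOmI lam hmem.1 hmem.2
      have hff : f l ≤ f (l+1) := hf (Nat.le_succ l)
      have e0 : Q0 a b f V lam (l+1) ≤ Q0 a b f V lam l := by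
        simp only [Q0]
        have := ih (b + (a - b) * lam) hOm
        linarith
      have e1 : Q1 a b Phi cs Pp f V lam (l+1) ≤ Q1 a b Phi cs Pp f V lam l := by
        simp only [Q1]
        have hv := ih b hbI
        have h1l : (0:ℝ) ≤ 1 - lam := by linarith [hmem.2]
        have e : (-cs + lam * (Phi - Pp + V a 1) + (1 - lam) * (-(f l) + V b (l + 1)))
            - (-cs + lam * (Phi - Pp + V a 1) + (1 - lam) * (-(f (l+1)) + V b (l + 1 + 1)))
            = (1 - lam) * ((-(f l) + V b (l+1)) - (-(f (l+1)) + V b (l+1+1))) := by ring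
        have h2 : 0 ≤ (1 - lam) * ((-(f l) + V b (l+1)) - (-(f (l+1)) + V b (l+1+1))) :=
          mul_nonneg h1l (by linarith)
        linarith
      have e2 : Q2 a b Phi cs Pp P3G V lam (l+1) = Q2 a b Phi cs Pp P3G V lam l := rfl
      have hm : max (max (Q0 a b f V lam (l+1)) (Q1 a b Phi cs Pp f V lam (l+1)))
          (Q2 a b Phi cs Pp P3G V lam (l+1)) ≤
          max (max (Q0 a b f V lam l) (Q1 a b Phi cs Pp f V lam l))
          (Q2 a b Phi cs Pp P3G V lam l) :=
        max_le_max (max_le_max e0 e1) (le_of_eq e2)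
      linarith
  -- iterated version
  have lemA' : ∀ lam ∈ Set.Icc (0:ℝ) 1, ∀ l l' : ℕ, 1 ≤ l → l ≤ l' → V lam l' ≤ V lam l := by
    intro lam hmem l l' hl hll'
    induction l', hll' using Nat.le_induction with
    | base => exact le_rfl
    | succ n hn ih => exact le_trans (lemA n (by omega) lam hmem) ih
  have hQ2a : Q2 a b Phi cs Pp P3G V a 1 ≤ gu + V a 1 := by
    have h := hBell a haI 1 le_rfl
    rw [h]; exact le_max_right _ _
  have hQ1a : Q1 a b Phi cs Pp f V a 1 ≤ gu + V a 1 := by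
    have h := hBell a haI 1 le_rfl
    rw [h]; exact le_trans (le_max_right _ _) (le_max_left _ _)
  -- chain lemma setup
  have hPhiPp : Pp ≤ Phi := by linarith
  set m : ℝ := min Phi P3G - Pp with hm_def
  have hm0 : 0 ≤ m := by
    have : Pp ≤ min Phi P3G := le_min hPhiPp hP.le
    simp only [hm_def]; linarith
  have hmPhi : m ≤ Phi - Pp := by
    have := min_le_left Phi P3G; simp only [hm_def]; linarith
  have hmP3G : m ≤ P3G - Pp := by
    have := min_le_right Phi P3G; simp only [hm_def]; linarith
  set K : ℝ := max 0 (V b 1 - V a 1 - m) with hK_def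
  have hK0 : 0 ≤ K := le_max_left _ _
  have hK1 : V b 1 - V a 1 - m ≤ K := le_max_right _ _
  -- Q2 bound on [b, p]
  have hQ2B : ∀ lam : ℝ, b ≤ lam → lam ≤ p → ∀ l : ℕ,
      Q2 a b Phi cs Pp P3G V lam l ≤ gu + V a 1 + (a - b) * K := by
    intro lam hbl hlp l
    have h1 : 0 ≤ a - lam := by linarith [le_trans hlp hpa]
    have h2 : a - lam ≤ a - b := by linarith
    have h3 : V b 1 - V a 1 - (P3G - Pp) ≤ K := by linarith
    have h4 : (a - lam) * (V b 1 - V a 1 - (P3G - Pp)) ≤ (a - b) * K := by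
      rcases le_total (V b 1 - V a 1 - (P3G - Pp)) 0 with h | h
      · have := mul_nonpos_of_nonneg_of_nonpos h1 h
        have := mul_nonneg (by linarith : (0:ℝ) ≤ a - b) hK0
        linarith
      · calc (a - lam) * (V b 1 - V a 1 - (P3G - Pp))
            ≤ (a - b) * (V b 1 - V a 1 - (P3G - Pp)) := by
              exact mul_le_mul_of_nonneg_right h2 h
          _ ≤ (a - b) * K := mul_le_mul_of_nonneg_left h3 (by linarith)
    have e : Q2 a b Phi cs Pp P3G V lam l
        = Q2 a b Phi cs Pp P3G V a 1 + (a - lam) * (V b 1 - V a 1 - (P3G - Pp)) := by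
      simp only [Q2]; ring
    linarith [hQ2a]
  -- chain lemma : gu + V on [b,p] is bounded by gu + V a 1 + (a-b)K
  have chain : ∀ l, 1 ≤ l → ∀ lam : ℝ, b ≤ lam → lam ≤ p →
      gu + V lam l ≤ gu + V a 1 + (a - b) * K := by
    apply down (fun l => ∀ lam : ℝ, b ≤ lam → lam ≤ p →
      gu + V lam l ≤ gu + V a 1 + (a - b) * K)
    · intro l hl hls lam hbl hlp
      have hmem : lam ∈ Set.Icc (0:ℝ) 1 := ⟨le_trans hb0 hbl, le_trans hlp hp1⟩
      rw [hterm l hls lam hmem]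
      exact hQ2B lam hbl hlp l
    · intro l hl hls ih lam hbl hlp
      have hmem : lam ∈ Set.Icc (0:ℝ) 1 := ⟨le_trans hb0 hbl, le_trans hlp hp1⟩
      rw [hBell lam hmem l hl]
      apply max_le (max_le ?_ ?_) (hQ2B lam hbl hlp l)
      · -- Q0 bound
        have hμb : b ≤ b + (a - b) * lam := hOm_geb lam hmem.1
        have hμp : b + (a - b) * lam ≤ p := hOm_lep lam hmem.1 hlp
        have hih := ih (b + (a - b) * lam) hμb hμp
        have hfg : 0 < gu + f l := by have := hgu l hl; linarith
        simp only [Q0]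
        linarith
      · -- Q1 bound
        have hw : -(f l) + V b (l+1) ≤ -(f 1) + V b 2 := by
          have h1 : f 1 ≤ f l := hf hl
          have h2 : V b (l+1) ≤ V b 2 := lemA' b hbI 2 (l+1) (by omega) (by omega)
          linarith
        have hσ : -K ≤ Phi - Pp + V a 1 - (-(f l) + V b (l+1)) := by
          have h1 : V b (l+1) ≤ V b 1 := lemA' b hbI 1 (l+1) le_rfl (by omega)
          have h2 : 0 ≤ f l := hf0 l hl
          linarith
        have h1a : (0:ℝ) ≤ 1 - a := by linarith
        have h2a : 0 ≤ a - lam := by linarith [le_trans hlp hpa]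
        have h3a : a - lam ≤ a - b := by linarith
        have e : Q1 a b Phi cs Pp f V a 1 - Q1 a b Phi cs Pp f V lam l
            = (a - lam) * (Phi - Pp + V a 1 - (-(f l) + V b (l+1)))
              + (1 - a) * ((-(f 1) + V b 2) - (-(f l) + V b (l+1))) := by
          simp only [Q1]; ring
        have t1 : (a - lam) * (-K) ≤ (a - lam) * (Phi - Pp + V a 1 - (-(f l) + V b (l+1))) :=
          mul_le_mul_of_nonneg_left hσ h2a
        have t2 : 0 ≤ (1 - a) * ((-(f 1) + V b 2) - (-(f l) + V b (l+1))) :=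
          mul_nonneg h1a (by linarith)
        have t3 : (a - lam) * K ≤ (a - b) * K := mul_le_mul_of_nonneg_right h3a hK0
        have t4 : (a - lam) * (-K) = -((a - lam) * K) := by ring
        linarith [hQ1a]
  -- conclude V b 1 ≤ V a 1
  have hxy : V b 1 ≤ V a 1 := by
    have h := chain 1 le_rfl b le_rfl hbp
    by_contra hcon
    push_neg at hcon
    rcases le_total (V b 1 - V a 1 - m) 0 with h' | h'
    · have hK : K = 0 := max_eq_left h'
      rw [hK] at h
      simp at h
      linarith
    · have hK : K = V b 1 - V a 1 - m := max_eq_right h'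
      rw [hK] at h
      nlinarith [mul_nonneg (sub_nonneg.2 hba) hm0]
  -- slope of Q1 is nonnegative
  have hsig : ∀ l : ℕ, 1 ≤ l → 0 ≤ Phi - Pp + V a 1 - (-(f l) + V b (l+1)) := by
    intro l hl
    have h1 : V b (l+1) ≤ V b 1 := lemA' b hbI 1 (l+1) le_rfl (by omega)
    have h2 : 0 ≤ f l := hf0 l hl
    linarith
  have hs : (0:ℝ) ≤ P3G - Pp + V a 1 - V b 1 := by linarith
  -- main claim
  have main : ∀ l, 1 ≤ l → ∀ lam : ℝ, p ≤ lam → lam ≤ 1 →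
      Q0 a b f V lam l <
        max (Q1 a b Phi cs Pp f V lam l) (Q2 a b Phi cs Pp P3G V lam l) := by
    apply down (fun l => ∀ lam : ℝ, p ≤ lam → lam ≤ 1 →
      Q0 a b f V lam l <
        max (Q1 a b Phi cs Pp f V lam l) (Q2 a b Phi cs Pp P3G V lam l))
    · intro l hl hls lam hpl hl1
      have h0l : 0 ≤ lam := le_trans hp0 hpl
      have hμI : (b + (a - b) * lam) ∈ Set.Icc (0:ℝ) 1 := hOmI lam h0l hl1
      have hμle : b + (a - b) * lam ≤ lam := hOm_le lam hpl
      have hVμ := hterm (l+1) (by omega) _ hμI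
      have hfg : 0 < gu + f l := by have := hgu l hl; linarith
      apply lt_of_lt_of_le _ (le_max_right (Q1 a b Phi cs Pp f V lam l) _)
      have e : Q2 a b Phi cs Pp P3G V (b + (a - b) * lam) (l+1)
          = Q2 a b Phi cs Pp P3G V lam l
            - (lam - (b + (a - b) * lam)) * (P3G - Pp + V a 1 - V b 1) := by
        simp only [Q2]; ring
      have t : 0 ≤ (lam - (b + (a - b) * lam)) * (P3G - Pp + V a 1 - V b 1) :=
        mul_nonneg (by linarith) hs
      have eq0 : Q0 a b f V lam l
          = -(f l) - gu + (gu + V (b + (a - b) * lam) (l+1)) := by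
        simp only [Q0]; ring
      rw [eq0, hVμ]
      linarith
    · intro l hl hls ih lam hpl hl1
      have h0l : 0 ≤ lam := le_trans hp0 hpl
      have hμI : (b + (a - b) * lam) ∈ Set.Icc (0:ℝ) 1 := hOmI lam h0l hl1
      have hμle : b + (a - b) * lam ≤ lam := hOm_le lam hpl
      have hμp : p ≤ b + (a - b) * lam := hOm_ge lam hpl
      have hB := hBell _ hμI (l+1) (by omega)
      have hlt := ih (b + (a - b) * lam) hμp hμI.2
      have hQ1le : Q1 a b Phi cs Pp f V (b + (a - b) * lam) (l+1) ≤
          Q1 a b Phi cs Pp f V lam l := by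
        have hσ := hsig (l+1) (by omega)
        have hw : -(f (l+1)) + V b (l+1+1) ≤ -(f l) + V b (l+1) := by
          have h1 : f l ≤ f (l+1) := hf (Nat.le_succ l)
          have h2 : V b (l+1+1) ≤ V b (l+1) := lemA (l+1) (by omega) b hbI
          linarith
        have h1l : (0:ℝ) ≤ 1 - lam := by linarith
        have e : Q1 a b Phi cs Pp f V lam l - Q1 a b Phi cs Pp f V (b + (a - b) * lam) (l+1)
            = (lam - (b + (a - b) * lam)) * (Phi - Pp + V a 1 - (-(f (l+1)) + V b (l+1+1)))
              + (1 - lam) * ((-(f l) + V b (l+1)) - (-(f (l+1)) + V b (l+1+1))) := by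
          simp only [Q1]; ring
        have t1 : 0 ≤ (lam - (b + (a - b) * lam)) *
            (Phi - Pp + V a 1 - (-(f (l+1)) + V b (l+1+1))) :=
          mul_nonneg (by linarith) hσ
        have t2 : 0 ≤ (1 - lam) * ((-(f l) + V b (l+1)) - (-(f (l+1)) + V b (l+1+1))) :=
          mul_nonneg h1l (by linarith)
        linarith
      have hQ2le : Q2 a b Phi cs Pp P3G V (b + (a - b) * lam) (l+1) ≤
          Q2 a b Phi cs Pp P3G V lam l := by
        have e : Q2 a b Phi cs Pp P3G V (b + (a - b) * lam) (l+1)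
            = Q2 a b Phi cs Pp P3G V lam l
              - (lam - (b + (a - b) * lam)) * (P3G - Pp + V a 1 - V b 1) := by
          simp only [Q2]; ring
        have t : 0 ≤ (lam - (b + (a - b) * lam)) * (P3G - Pp + V a 1 - V b 1) :=
          mul_nonneg (by linarith) hs
        linarith
      have hmax : gu + V (b + (a - b) * lam) (l+1) ≤
          max (Q1 a b Phi cs Pp f V lam l) (Q2 a b Phi cs Pp P3G V lam l) := by
        rw [hB]
        apply max_le (max_le ?_ ?_) (le_trans hQ2le (le_max_right _ _))
        · exact le_trans hlt.le
            (max_le (le_trans hQ1le (le_max_left _ _)) (le_trans hQ2le (le_max_right _ _)))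
        · exact le_trans hQ1le (le_max_left _ _)
      have hfg : 0 < gu + f l := by have := hgu l hl; linarith
      have eq0 : Q0 a b f V lam l
          = -(f l) - gu + (gu + V (b + (a - b) * lam) (l+1)) := by
        simp only [Q0]; ring
      rw [eq0]
      have hlt2 : -(f l) - gu + (gu + V (b + (a - b) * lam) (l+1)) <
          gu + V (b + (a - b) * lam) (l+1) := by linarith
      exact lt_of_lt_of_le hlt2 hmax
  intro lam hmem hgt l hl
  rw [← hp_def] at hgt
  exact main l hl lam hgt.le hmem.2
end

section
/- (Proposition 4.4.) For every λ ∈ [0,1) and every integer l ≥ 1: Q₁(λ,l) ≥ Q₂(λ,l) if and only if −f(l) + V(β, l+1) ≥ Φ − P_{3G} + V(β, 1). In particular, whether the secondary user waits or uses the dedicated channel after sensing the licensed channel busy depends only on the packet delay l, and not on the belief λ nor on the sensing cost c_s. -/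
theorem stmt_9
    (a b Phi cs Pp P3G gu : ℝ) (f : ℕ → ℝ) (V : ℝ → ℕ → ℝ) (lstar : ℕ)
    (hb0 : 0 ≤ b) (hba : b ≤ a) (ha1 : a ≤ 1) (hden : 0 < 1 - a + b)
    (hcs : 0 ≤ cs) (hP : Pp < P3G) (hPhi : 0 ≤ Phi - cs - Pp)
    (hf : Monotone f) (hf0 : ∀ l : ℕ, 1 ≤ l → 0 ≤ f l)
    (hlstar : 1 ≤ lstar)
    (hBell : ∀ lam ∈ Set.Icc (0:ℝ) 1, ∀ l : ℕ, 1 ≤ l →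
      gu + V lam l =
        max (max (Q0 a b f V lam l) (Q1 a b Phi cs Pp f V lam l))
          (Q2 a b Phi cs Pp P3G V lam l))
    (hterm : ∀ l : ℕ, lstar ≤ l → ∀ lam ∈ Set.Icc (0:ℝ) 1,
      gu + V lam l = Q2 a b Phi cs Pp P3G V lam l) :
    ∀ lam ∈ Set.Ico (0:ℝ) 1, ∀ l : ℕ, 1 ≤ l →
      (Q1 a b Phi cs Pp f V lam l ≥ Q2 a b Phi cs Pp P3G V lam l ↔
        -(f l) + V b (l + 1) ≥ Phi - P3G + V b 1) := by
  intro lam hlam l _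
  have h1 : 0 < 1 - lam := by linarith [hlam.2]
  simp only [Q1, Q2, ge_iff_le]
  constructor <;> intro h <;> nlinarith [h1]
end

section
/- (Corollary 4.1: Never Wait After Sensing.) If in addition −f(l) < Φ − P_{3G} for every integer l ≥ 1, then for every λ ∈ [0,1) and every integer l ≥ 1, Q₂(λ,l) > Q₁(λ,l): the secondary user always transmits on the dedicated channel when the sensed licensed channel is busy. -/
theorem stmt_10
    (a b Phi cs Pp P3G gu : ℝ) (f : ℕ → ℝ) (V : ℝ → ℕ → ℝ) (lstar : ℕ)
    (hb0 : 0 ≤ b) (hba : b ≤ a) (ha1 : a ≤ 1) (hden : 0 < 1 - a + b)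
    (hcs : 0 ≤ cs) (hP : Pp < P3G) (hPhi : 0 ≤ Phi - cs - Pp)
    (hf : Monotone f) (hf0 : ∀ l : ℕ, 1 ≤ l → 0 ≤ f l)
    (hlstar : 1 ≤ lstar)
    (hBell : ∀ lam ∈ Set.Icc (0:ℝ) 1, ∀ l : ℕ, 1 ≤ l →
      gu + V lam l =
        max (max (Q0 a b f V lam l) (Q1 a b Phi cs Pp f V lam l))
          (Q2 a b Phi cs Pp P3G V lam l))
    (hterm : ∀ l : ℕ, lstar ≤ l → ∀ lam ∈ Set.Icc (0:ℝ) 1,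
      gu + V lam l = Q2 a b Phi cs Pp P3G V lam l)
    (hnw : ∀ l : ℕ, 1 ≤ l → -(f l) < Phi - P3G) :
    ∀ lam ∈ Set.Ico (0:ℝ) 1, ∀ l : ℕ, 1 ≤ l →
      Q2 a b Phi cs Pp P3G V lam l > Q1 a b Phi cs Pp f V lam l := by
  -- V is nonincreasing in the delay index
  have key : ∀ k : ℕ, ∀ l : ℕ, 1 ≤ l → lstar ≤ l + k →
      ∀ lam ∈ Set.Icc (0:ℝ) 1, V lam (l + 1) ≤ V lam l := by
    intro k
    induction k with
    | zero =>
      intro l hl hls lam hmem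
      have h1 := hterm l (by omega) lam hmem
      have h2 := hterm (l + 1) (by omega) lam hmem
      simp only [Q2] at h1 h2
      linarith
    | succ k ih =>
      intro l hl hls lam hmem
      by_cases hcase : lstar ≤ l
      · have h1 := hterm l hcase lam hmem
        have h2 := hterm (l + 1) (by omega) lam hmem
        simp only [Q2] at h1 h2
        linarith
      · -- use IH at l+1
        obtain ⟨hlam0, hlam1⟩ := hmem
        have hmemΩ : b + (a - b) * lam ∈ Set.Icc (0:ℝ) 1 := by
          constructor <;> nlinarith
        have hmemb : b ∈ Set.Icc (0:ℝ) 1 := ⟨hb0, by linarith⟩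
        have ihΩ := ih (l + 1) (by omega) (by omega) _ hmemΩ
        have ihb := ih (l + 1) (by omega) (by omega) b hmemb
        have hQ0 : Q0 a b f V lam (l + 1) ≤ Q0 a b f V lam l := by
          simp only [Q0]
          have := hf (Nat.le_succ l)
          linarith
        have hQ1 : Q1 a b Phi cs Pp f V lam (l + 1) ≤ Q1 a b Phi cs Pp f V lam l := by
          simp only [Q1]
          have hfl := hf (Nat.le_succ l)
          have h1lam : (0:ℝ) ≤ 1 - lam := by linarith
          nlinarith
        have hQ2 : Q2 a b Phi cs Pp P3G V lam (l + 1) = Q2 a b Phi cs Pp P3G V lam l := rfl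
        have h1 := hBell lam ⟨hlam0, hlam1⟩ l hl
        have h2 := hBell lam ⟨hlam0, hlam1⟩ (l + 1) (by omega)
        have : max (max (Q0 a b f V lam (l+1)) (Q1 a b Phi cs Pp f V lam (l+1)))
            (Q2 a b Phi cs Pp P3G V lam (l+1)) ≤
            max (max (Q0 a b f V lam l) (Q1 a b Phi cs Pp f V lam l))
            (Q2 a b Phi cs Pp P3G V lam l) :=
          max_le_max (max_le_max hQ0 hQ1) (le_of_eq hQ2)
        linarith
  have dec : ∀ l : ℕ, 1 ≤ l → ∀ lam ∈ Set.Icc (0:ℝ) 1, V lam (l + 1) ≤ V lam l := by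
    intro l hl lam hmem
    exact key lstar l hl (by omega) lam hmem
  have chain : ∀ l : ℕ, 1 ≤ l → ∀ lam ∈ Set.Icc (0:ℝ) 1, V lam l ≤ V lam 1 := by
    intro l hl
    induction l with
    | zero => omega
    | succ n ih =>
      intro lam hmem
      rcases Nat.eq_or_lt_of_le hl with h | h
      · simp [← h]
      · have hn : 1 ≤ n := by omega
        exact le_trans (dec n hn lam hmem) (ih hn lam hmem)
  intro lam hmem l hl
  obtain ⟨hlam0, hlam1⟩ := hmem
  have hmemb : b ∈ Set.Icc (0:ℝ) 1 := ⟨hb0, by linarith⟩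
  have hVb : V b (l + 1) ≤ V b 1 := chain (l + 1) (by omega) b hmemb
  have hbr : 0 < Phi - P3G + f l := by have := hnw l hl; linarith
  have h1lam : (0:ℝ) < 1 - lam := by linarith
  simp only [Q1, Q2]
  nlinarith [mul_pos h1lam hbr, mul_nonneg h1lam.le (sub_nonneg.mpr hVb)]
end

section
/- (Intermediate claim from the proof of Proposition 4.1, second case.) Fix an integer l ≥ 1. If Φ + f(l) − P_p + V(α, 1) − V(β, l+1) < 0 and the function μ ↦ V(μ, l+1) is nondecreasing on [0,1], then Q₁(λ, l) ≤ Q₀(λ, l) for every λ ∈ [0,1]; i.e., sensing-and-waiting is never strictly better than waiting. -/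
theorem stmt_13
    (a b Phi cs Pp P3G gu : ℝ) (f : ℕ → ℝ) (V : ℝ → ℕ → ℝ) (lstar : ℕ)
    (hb0 : 0 ≤ b) (hba : b ≤ a) (ha1 : a ≤ 1) (hden : 0 < 1 - a + b)
    (hcs : 0 ≤ cs) (hP : Pp < P3G) (hPhi : 0 ≤ Phi - cs - Pp)
    (hf : Monotone f) (hf0 : ∀ l : ℕ, 1 ≤ l → 0 ≤ f l)
    (hlstar : 1 ≤ lstar)
    (hBell : ∀ lam ∈ Set.Icc (0:ℝ) 1, ∀ l : ℕ, 1 ≤ l →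
      gu + V lam l =
        max (max (Q0 a b f V lam l) (Q1 a b Phi cs Pp f V lam l))
          (Q2 a b Phi cs Pp P3G V lam l))
    (hterm : ∀ l : ℕ, lstar ≤ l → ∀ lam ∈ Set.Icc (0:ℝ) 1,
      gu + V lam l = Q2 a b Phi cs Pp P3G V lam l)
    (l : ℕ) (hl : 1 ≤ l)
    (hneg : Phi + f l - Pp + V a 1 - V b (l + 1) < 0)
    (hmono : MonotoneOn (fun mu => V mu (l + 1)) (Set.Icc (0:ℝ) 1)) :
    ∀ lam ∈ Set.Icc (0:ℝ) 1, Q1 a b Phi cs Pp f V lam l ≤ Q0 a b f V lam l := by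
  rintro lam ⟨h0, h1⟩
  have hmem : b + (a - b) * lam ∈ Set.Icc (0:ℝ) 1 := by
    constructor <;> nlinarith
  have hb : b ∈ Set.Icc (0:ℝ) 1 := ⟨hb0, by linarith⟩
  have hle : V b (l + 1) ≤ V (b + (a - b) * lam) (l + 1) :=
    hmono hb hmem (by nlinarith)
  have h2 : lam * (Phi + f l - Pp + V a 1 - V b (l + 1)) ≤ 0 :=
    mul_nonpos_of_nonneg_of_nonpos h0 hneg.le
  simp only [Q0, Q1]
  nlinarith
end
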